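/- arXiv:math/9912079 — 10 statements merged into one kernel-verified Lean document; each statement's English description precedes it below -/
import Mathlib

section
/- Let n be a pseudoprime of basis k, and let Π_n := Σ_{d ∣ n} μ(n/d)·k^d, where μ is the Möbius function and the sum is over positive divisors d of n. Then n divides k^n - k - Π_n (as integers). -/
/-!
Since `n ∣ k^(n-1) - 1`, also `n ∣ k^n - k`, so it suffices to show Gauss's congruence
`n ∣ ∑_{d ∣ n} μ(d) a^(n/d)` for every integer `a`. It is checked one prime power `p^(t+1) ∥ n`
at a time: writing `n = p^(t+1) m`, the divisors of `n` are the products `i e` with `i ∣ p^(t+1)`,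
`e ∣ m`, and as `μ(p^j) = 0` for `j ≥ 2` the sum becomes
`∑_{e ∣ m} μ(e) (b^(p^(t+1)) - b^(p^t))` with `b = a^(m/e)`. Each bracket is divisible by
`p^(t+1)`: Fermat gives `p ∣ b^p - b`, and each further `p`-th power gains a factor `p`.
-/

/-- `n` is a pseudoprime of basis `k`: an odd composite number, relatively prime
to `k`, with `n ∣ k^(n-1) - 1`. -/
def IsPseudoprime (k n : ℕ) : Prop :=
  Odd n ∧ 1 < n ∧ ¬ n.Prime ∧ Nat.gcd k n = 1 ∧ (n : ℤ) ∣ (k : ℤ) ^ (n - 1) - 1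

open Finset ArithmeticFunction
open scoped ArithmeticFunction.Moebius

theorem Nat.Coprime.sum_divisors_mul_eq_sum_sum {M : Type*} [AddCommMonoid M] {m n : ℕ}
    (hmn : m.Coprime n) (f : ℕ → M) :
    ∑ d ∈ (m * n).divisors, f d = ∑ i ∈ m.divisors, ∑ j ∈ n.divisors, f (i * j) := by
  rw [hmn.divisors_mul, sum_map]
  exact (sum_attach _ fun x => f (x.1 * x.2)).trans (sum_product _ _ _)

theorem Int.prime_pow_dvd_pow_prime_pow_sub (a : ℤ) {p : ℕ} (hp : p.Prime) (t : ℕ) :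
    (p : ℤ) ^ (t + 1) ∣ a ^ p ^ (t + 1) - a ^ p ^ t := by
  simpa only [← pow_mul, ← pow_succ'] using
    dvd_sub_pow_of_dvd_sub (Int.prime_dvd_pow_self_sub hp a) t

theorem sum_divisors_prime_pow_moebius_mul_pow {R : Type*} [CommRing R] (b : R) {p : ℕ}
    (hp : p.Prime) (t : ℕ) :
    ∑ i ∈ (p ^ (t + 1)).divisors, (μ i : R) * b ^ (p ^ (t + 1) / i) =
      b ^ p ^ (t + 1) - b ^ p ^ t := by
  have hsq (j : ℕ) : μ (p ^ (j + 2)) = 0 := by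
    rw [moebius_apply_prime_pow hp (by omega)]
    simp
  rw [Nat.sum_divisors_prime_pow hp, sum_range_succ', sum_range_succ']
  simp only [hsq, Int.cast_zero, zero_mul, sum_const_zero, zero_add, moebius_apply_prime hp,
    pow_one, pow_zero, moebius_apply_one, Nat.div_one, Int.cast_one, one_mul, Int.cast_neg]
  rw [pow_succ, Nat.mul_div_cancel _ hp.pos]
  ring

theorem prime_pow_dvd_sum_moebius_mul_pow (a : ℤ) {p m : ℕ} (hp : p.Prime) (hpm : p.Coprime m)
    (t : ℕ) : (p : ℤ) ^ (t + 1) ∣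
      ∑ d ∈ (p ^ (t + 1) * m).divisors, (μ d : ℤ) * a ^ (p ^ (t + 1) * m / d) := by
  have hcop : (p ^ (t + 1)).Coprime m := hpm.pow_left _
  rw [hcop.sum_divisors_mul_eq_sum_sum, sum_comm]
  refine dvd_sum fun e he => ?_
  have hsplit : ∀ i ∈ (p ^ (t + 1)).divisors,
      (μ (i * e) : ℤ) * a ^ (p ^ (t + 1) * m / (i * e)) =
        μ e * (μ i * (a ^ (m / e)) ^ (p ^ (t + 1) / i)) := fun i hi => by
    have hie : i.Coprime e := hcop.coprime_dvd_left (Nat.dvd_of_mem_divisors hi)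
      |>.coprime_dvd_right (Nat.dvd_of_mem_divisors he)
    rw [isMultiplicative_moebius.map_mul_of_coprime hie, ← pow_mul,
      ← Nat.div_mul_div_comm (Nat.dvd_of_mem_divisors hi) (Nat.dvd_of_mem_divisors he)]
    ring
  have hinner := sum_divisors_prime_pow_moebius_mul_pow (a ^ (m / e)) hp t
  simp only [Int.cast_id] at hinner
  rw [sum_congr rfl hsplit, ← mul_sum, hinner]
  exact (Int.prime_pow_dvd_pow_prime_pow_sub _ hp t).mul_left _

theorem Int.natCast_dvd_of_forall_ordProj_dvd {n : ℕ} {x : ℤ} (hn : n ≠ 0)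
    (h : ∀ p ∈ n.primeFactors, (p : ℤ) ^ n.factorization p ∣ x) : (n : ℤ) ∣ x := by
  rw [Nat.prod_primeFactors_pow_factorization hn, Nat.cast_prod]
  refine prod_dvd_of_coprime (fun p hp q hq hpq => ?_) h
  have hpow : (p ^ n.factorization p).Coprime (q ^ n.factorization q) :=
    (Nat.coprime_primes (Nat.prime_of_mem_primeFactors hp)
      (Nat.prime_of_mem_primeFactors hq)).2 hpq |>.pow _ _
  exact hpow.isCoprime

theorem dvd_sum_moebius_mul_pow (a : ℤ) {n : ℕ} (hn : n ≠ 0) :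
    (n : ℤ) ∣ ∑ d ∈ n.divisors, (μ d : ℤ) * a ^ (n / d) := by
  refine Int.natCast_dvd_of_forall_ordProj_dvd hn fun p hpn => ?_
  have hp := Nat.prime_of_mem_primeFactors hpn
  obtain ⟨t, ht⟩ : ∃ t, n.factorization p = t + 1 :=
    Nat.exists_eq_add_one.2 (hp.factorization_pos_of_dvd hn (Nat.dvd_of_mem_primeFactors hpn))
  obtain ⟨m, hpm, rfl⟩ : ∃ m, p.Coprime m ∧ n = p ^ (t + 1) * m :=
    ⟨_, Nat.coprime_ordCompl hp hn, ht ▸ (Nat.ordProj_mul_ordCompl_eq_self n p).symm⟩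
  rw [ht]
  exact prime_pow_dvd_sum_moebius_mul_pow a hp hpm t

/-- If `n` is a pseudoprime of basis `k` and `Π_n = ∑_{d ∣ n} μ(n/d) k^d` is the number
of points of exact period `n` of the circle map, then `n ∣ k^n - k - Π_n`. -/
theorem pseudoprime_dvd_sub_moebius_sum (k n : ℕ) (h : IsPseudoprime k n) :
    (n : ℤ) ∣ (k : ℤ) ^ n - (k : ℤ)
      - ∑ d ∈ n.divisors, (ArithmeticFunction.moebius (n / d)) * (k : ℤ) ^ d := by
  obtain ⟨-, hn, -, -, hfermat⟩ := h
  have hn0 : n ≠ 0 := by omega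
  have hk : (n : ℤ) ∣ (k : ℤ) ^ n - k := by
    obtain ⟨m, rfl⟩ := Nat.exists_eq_add_of_lt hn
    simpa [pow_succ', ← mul_sub_one] using hfermat.mul_left (k : ℤ)
  have hgauss := dvd_sum_moebius_mul_pow (k : ℤ) hn0
  rw [← Nat.sum_div_divisors, sum_congr rfl fun d hd => by
    rw [Nat.div_div_self (Nat.dvd_of_mem_divisors hd) hn0]] at hgauss
  exact hk.sub hgauss
end

section
/- Let n₁ and n₂ be distinct odd primes and let k > 1 be a natural number with gcd(n₁, k) = gcd(n₂, k) = 1. Then n = n₁·n₂ is a pseudoprime of basis k if and only if n₁ divides k^(n₂) - k and n₂ divides k^(n₁) - k (as integers). -/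
lemma aux_dvd_iff (p q k : ℕ) (hp : p.Prime) (hq : 1 ≤ q) (hg : Nat.gcd p k = 1) :
    ((p : ℤ) ∣ (k : ℤ) ^ (p * q - 1) - 1) ↔ ((p : ℤ) ∣ (k : ℤ) ^ q - (k : ℤ)) := by
  haveI := Fact.mk hp
  have hk0 : (k : ZMod p) ≠ 0 := by
    rw [Ne, ZMod.natCast_eq_zero_iff]
    intro hdvd
    have : p ∣ 1 := hg ▸ Nat.dvd_gcd dvd_rfl hdvd
    exact hp.one_lt.ne' (Nat.eq_one_of_dvd_one this)
  have hferm : (k : ZMod p) ^ (p - 1) = 1 := ZMod.pow_card_sub_one_eq_one hk0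
  have hexp : p * q - 1 = (p - 1) * q + (q - 1) := by
    have hp1 : 1 ≤ p := hp.one_lt.le
    have hle : q ≤ p * q := Nat.le_mul_of_pos_left q hp.pos
    rw [Nat.sub_mul, one_mul]
    omega
  have h1 : ((p : ℤ) ∣ (k : ℤ) ^ (p * q - 1) - 1) ↔ (k : ZMod p) ^ (q - 1) = 1 := by
    rw [← ZMod.intCast_zmod_eq_zero_iff_dvd]
    push_cast
    rw [hexp, pow_add, pow_mul, hferm, one_pow, one_mul, sub_eq_zero]
  have h2 : ((p : ℤ) ∣ (k : ℤ) ^ q - (k : ℤ)) ↔ (k : ZMod p) ^ (q - 1) = 1 := by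
    rw [← ZMod.intCast_zmod_eq_zero_iff_dvd]
    push_cast
    have : (k : ZMod p) ^ q = (k : ZMod p) ^ (q - 1) * k := by
      rw [← pow_succ]
      congr 1
      omega
    rw [sub_eq_zero, this]
    constructor
    · intro h
      exact mul_right_cancel₀ hk0 (by rw [one_mul]; exact h)
    · intro h; rw [h, one_mul]
  rw [h1, h2]

theorem pseudoprime_two_factors_iff (n₁ n₂ k : ℕ)
    (h₁ : n₁.Prime) (h₂ : n₂.Prime) (hodd₁ : Odd n₁) (hodd₂ : Odd n₂) (hne : n₁ ≠ n₂)
    (hk : 1 < k) (hg₁ : Nat.gcd n₁ k = 1) (hg₂ : Nat.gcd n₂ k = 1) :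
    IsPseudoprime k (n₁ * n₂) ↔
      ((n₁ : ℤ) ∣ (k : ℤ) ^ n₂ - (k : ℤ) ∧ (n₂ : ℤ) ∣ (k : ℤ) ^ n₁ - (k : ℤ)) := by
  have hcop : Nat.Coprime n₁ n₂ := (Nat.coprime_primes h₁ h₂).mpr hne
  have hcopZ : IsCoprime (n₁ : ℤ) (n₂ : ℤ) := by
    rw [Int.isCoprime_iff_gcd_eq_one]
    exact_mod_cast hcop
  have hsplit : ∀ x : ℤ, ((n₁ * n₂ : ℕ) : ℤ) ∣ x ↔ (n₁ : ℤ) ∣ x ∧ (n₂ : ℤ) ∣ x := by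
    intro x
    push_cast
    constructor
    · intro h
      exact ⟨(dvd_mul_right _ _).trans h, (dvd_mul_left _ _).trans h⟩
    · rintro ⟨ha, hb⟩
      exact hcopZ.mul_dvd ha hb
  have e1 : ((n₁ : ℤ) ∣ (k : ℤ) ^ (n₁ * n₂ - 1) - 1) ↔ ((n₁ : ℤ) ∣ (k : ℤ) ^ n₂ - (k : ℤ)) :=
    aux_dvd_iff n₁ n₂ k h₁ h₂.one_lt.le hg₁
  have e2 : ((n₂ : ℤ) ∣ (k : ℤ) ^ (n₁ * n₂ - 1) - 1) ↔ ((n₂ : ℤ) ∣ (k : ℤ) ^ n₁ - (k : ℤ)) := by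
    rw [mul_comm]
    exact aux_dvd_iff n₂ n₁ k h₂ h₁.one_lt.le hg₂
  constructor
  · rintro ⟨-, -, -, -, hdvd⟩
    rw [hsplit] at hdvd
    exact ⟨e1.mp hdvd.1, e2.mp hdvd.2⟩
  · rintro ⟨ha, hb⟩
    refine ⟨hodd₁.mul hodd₂, ?_, ?_, ?_, ?_⟩
    · exact one_lt_mul_of_lt_of_le h₁.one_lt h₂.one_lt.le
    · intro hpr
      rcases (Nat.prime_mul_iff.mp hpr) with ⟨-, h⟩ | ⟨-, h⟩
      · exact h₂.one_lt.ne' h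
      · exact h₁.one_lt.ne' h
    · exact Nat.Coprime.mul_right (Nat.coprime_comm.mp hg₁) (Nat.coprime_comm.mp hg₂)
    · rw [hsplit]
      exact ⟨e1.mpr ha, e2.mpr hb⟩
end

section
/- Let n₁ and n₂ be distinct primes with n₁ > n₂, let k > 1 be a natural number with gcd(n₁, k) = gcd(n₂, k) = 1, and suppose n = n₁·n₂ is a pseudoprime of basis k. Then n divides k^(n₁ - n₂) - 1 (as integers). -/
lemma dvd_iff_order (p k m : ℕ) [Fact p.Prime] :
    (p : ℤ) ∣ (k : ℤ) ^ m - 1 ↔ orderOf (k : ZMod p) ∣ m := by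
  rw [orderOf_dvd_iff_pow_eq_one, ← ZMod.intCast_zmod_eq_zero_iff_dvd]
  push_cast
  rw [sub_eq_zero]

lemma aux_dvd (p q k : ℕ) (hp : p.Prime) (hq : q.Prime)
    (hg : Nat.gcd p k = 1)
    (hdvd : (p : ℤ) ∣ (k : ℤ) ^ (p * q - 1) - 1) :
    orderOf (k : ZMod p) ∣ p - 1 ∧ orderOf (k : ZMod p) ∣ q - 1 := by
  haveI : Fact p.Prime := ⟨hp⟩
  rw [dvd_iff_order] at hdvd
  have hk0 : (k : ZMod p) ≠ 0 := by
    rw [Ne, ZMod.natCast_eq_zero_iff]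
    intro h
    have : p ∣ Nat.gcd p k := Nat.dvd_gcd dvd_rfl h
    rw [hg] at this
    exact hp.one_lt.ne' (Nat.eq_one_of_dvd_one this)
  have hd1 : orderOf (k : ZMod p) ∣ p - 1 := by
    rw [orderOf_dvd_iff_pow_eq_one]
    exact ZMod.pow_card_sub_one_eq_one hk0
  refine ⟨hd1, ?_⟩
  have key : p * q - 1 = q * (p - 1) + (q - 1) := by
    have h1 : q * (p - 1) = q * p - q := by
      cases p with
      | zero => simp
      | succ p' => simp [Nat.mul_succ, Nat.succ_sub_one]
    have h2 : q ≤ q * p := Nat.le_mul_of_pos_right q hp.pos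
    have := hp.one_lt
    have := hq.one_lt
    rw [Nat.mul_comm p q]
    omega
  rw [key] at hdvd
  exact (Nat.dvd_add_right (Dvd.dvd.mul_left hd1 q)).mp hdvd

theorem pseudoprime_dvd_pow_diff_sub_one (n₁ n₂ k : ℕ)
    (h₁ : n₁.Prime) (h₂ : n₂.Prime) (hlt : n₂ < n₁) (hk : 1 < k)
    (hg₁ : Nat.gcd n₁ k = 1) (hg₂ : Nat.gcd n₂ k = 1)
    (hps : IsPseudoprime k (n₁ * n₂)) :
    ((n₁ * n₂ : ℕ) : ℤ) ∣ (k : ℤ) ^ (n₁ - n₂) - 1 := by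
  haveI : Fact n₁.Prime := ⟨h₁⟩
  haveI : Fact n₂.Prime := ⟨h₂⟩
  obtain ⟨-, -, -, -, hdvd⟩ := hps
  have hd1 : (n₁ : ℤ) ∣ (k : ℤ) ^ (n₁ * n₂ - 1) - 1 :=
    dvd_trans (by exact_mod_cast Dvd.intro n₂ rfl) hdvd
  have hd2 : (n₂ : ℤ) ∣ (k : ℤ) ^ (n₁ * n₂ - 1) - 1 :=
    dvd_trans (by exact_mod_cast Dvd.intro_left n₁ rfl) hdvd
  obtain ⟨a1, a2⟩ := aux_dvd n₁ n₂ k h₁ h₂ hg₁ hd1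
  rw [Nat.mul_comm] at hd2
  obtain ⟨b1, b2⟩ := aux_dvd n₂ n₁ k h₂ h₁ hg₂ hd2
  have e : n₁ - n₂ = (n₁ - 1) - (n₂ - 1) := by have := h₂.pos; omega
  have c1 : (n₁ : ℤ) ∣ (k : ℤ) ^ (n₁ - n₂) - 1 := by
    rw [dvd_iff_order, e]; exact Nat.dvd_sub a1 a2
  have c2 : (n₂ : ℤ) ∣ (k : ℤ) ^ (n₁ - n₂) - 1 := by
    rw [dvd_iff_order, e]; exact Nat.dvd_sub b2 b1
  have hcop : Nat.Coprime n₁ n₂ :=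
    (Nat.coprime_primes h₁ h₂).mpr (by omega)
  push_cast
  exact (Nat.isCoprime_iff_coprime.mpr hcop).mul_dvd c1 c2
end

section
/- Let n₁ and n₂ be distinct primes, let k > 1 be a natural number with gcd(n₁, k) = gcd(n₂, k) = 1, and suppose n = n₁·n₂ is a pseudoprime of basis k. Then for every natural number r ≥ 1, n₁ divides k^(|n₁^r - n₂|) - 1 (as integers). -/
theorem pseudoprime_dvd_pow_absDiff_one (n₁ n₂ k : ℕ)
    (h₁ : n₁.Prime) (h₂ : n₂.Prime) (hne : n₁ ≠ n₂) (hk : 1 < k)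
    (hg₁ : Nat.gcd n₁ k = 1) (hg₂ : Nat.gcd n₂ k = 1)
    (hps : IsPseudoprime k (n₁ * n₂)) :
    ∀ r : ℕ, 1 ≤ r → (n₁ : ℤ) ∣ (k : ℤ) ^ ((n₁ : ℤ) ^ r - (n₂ : ℤ)).natAbs - 1 := by
  intro r hr
  haveI := Fact.mk h₁
  -- k is nonzero mod n₁
  have hknz : (k : ZMod n₁) ≠ 0 := by
    rw [Ne, ZMod.natCast_eq_zero_iff]
    exact (Nat.Prime.coprime_iff_not_dvd h₁).mp hg₁
  -- Fermat: k^(n₁-1) = 1 in ZMod n₁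
  have hferm : (k : ZMod n₁) ^ (n₁ - 1) = 1 := ZMod.pow_card_sub_one_eq_one hknz
  -- pseudoprime: k^(n₁*n₂-1) = 1 in ZMod n₁
  have hps' : (k : ZMod n₁) ^ (n₁ * n₂ - 1) = 1 := by
    have hd : (n₁ : ℤ) ∣ (k : ℤ) ^ (n₁ * n₂ - 1) - 1 :=
      dvd_trans (by exact_mod_cast Int.natCast_dvd_natCast.mpr ⟨n₂, rfl⟩) hps.2.2.2.2
    have := (ZMod.intCast_zmod_eq_zero_iff_dvd _ n₁).mpr hd
    push_cast at this
    exact sub_eq_zero.mp this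
  set d := orderOf (k : ZMod n₁) with hdef
  have hd1 : d ∣ n₁ - 1 := orderOf_dvd_of_pow_eq_one hferm
  have hd2 : d ∣ n₁ * n₂ - 1 := orderOf_dvd_of_pow_eq_one hps'
  -- pass to integers
  have h1 : (d : ℤ) ∣ (n₁ : ℤ) - 1 := by
    have := Int.natCast_dvd_natCast.mpr hd1
    rwa [Nat.cast_sub h₁.one_le] at this
  have h2 : (d : ℤ) ∣ (n₁ : ℤ) * n₂ - 1 := by
    have := Int.natCast_dvd_natCast.mpr hd2
    rwa [Nat.cast_sub (Nat.one_le_iff_ne_zero.mpr (Nat.mul_ne_zero h₁.pos.ne' h₂.pos.ne')), Nat.cast_mul] at this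
  have hn2 : (d : ℤ) ∣ (n₂ : ℤ) - 1 := by
    have : (n₂ : ℤ) - 1 = ((n₁ : ℤ) * n₂ - 1) - n₂ * ((n₁ : ℤ) - 1) := by ring
    rw [this]
    exact dvd_sub h2 (Dvd.dvd.mul_left h1 _)
  have hn1r : (d : ℤ) ∣ (n₁ : ℤ) ^ r - 1 := by
    have : (n₁ : ℤ) - 1 ∣ (n₁ : ℤ) ^ r - 1 ^ r := sub_dvd_pow_sub_pow _ _ r
    simpa using h1.trans (by simpa using this)
  have hdiff : (d : ℤ) ∣ (n₁ : ℤ) ^ r - n₂ := by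
    have : (n₁ : ℤ) ^ r - n₂ = ((n₁ : ℤ) ^ r - 1) - ((n₂ : ℤ) - 1) := by ring
    rw [this]; exact dvd_sub hn1r hn2
  have hdm : d ∣ ((n₁ : ℤ) ^ r - (n₂ : ℤ)).natAbs := by
    have := Int.natAbs_dvd_natAbs.mpr hdiff
    simpa using this
  have hpow : (k : ZMod n₁) ^ ((n₁ : ℤ) ^ r - (n₂ : ℤ)).natAbs = 1 :=
    orderOf_dvd_iff_pow_eq_one.mp hdm
  have : ((((k : ℤ) ^ ((n₁ : ℤ) ^ r - (n₂ : ℤ)).natAbs - 1 : ℤ)) : ZMod n₁) = 0 := by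
    push_cast
    rw [hpow]; ring
  exact (ZMod.intCast_zmod_eq_zero_iff_dvd _ n₁).mp this
end

section
/- Let n₁ and n₂ be distinct primes, let k > 1 be a natural number with gcd(n₁, k) = gcd(n₂, k) = 1, and suppose n = n₁·n₂ is a pseudoprime of basis k. Then for every natural number r ≥ 1, n₂ divides k^(|n₂^r - n₁|) - 1 (as integers). -/
theorem pseudoprime_dvd_pow_absDiff_one' (n₁ n₂ k : ℕ)
    (h₁ : n₁.Prime) (h₂ : n₂.Prime) (hne : n₁ ≠ n₂) (hk : 1 < k)
    (hg₁ : Nat.gcd n₁ k = 1) (hg₂ : Nat.gcd n₂ k = 1)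
    (hps : IsPseudoprime k (n₁ * n₂)) :
    ∀ r : ℕ, 1 ≤ r → (n₂ : ℤ) ∣ (k : ℤ) ^ ((n₂ : ℤ) ^ r - (n₁ : ℤ)).natAbs - 1 := by
  intro r hr
  haveI : Fact n₂.Prime := ⟨h₂⟩
  have hkn : (k : ZMod n₂) ≠ 0 := by
    rw [Ne, ZMod.natCast_eq_zero_iff]
    intro h
    have : n₂ ∣ 1 := hg₂ ▸ Nat.dvd_gcd dvd_rfl h
    exact Nat.Prime.one_lt h₂ |>.ne' (Nat.dvd_one.mp this)
  set d := orderOf (k : ZMod n₂) with hd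
  -- Fermat
  have hferm : (k : ZMod n₂) ^ (n₂ - 1) = 1 := ZMod.pow_card_sub_one_eq_one hkn
  have hd1 : d ∣ n₂ - 1 := orderOf_dvd_of_pow_eq_one hferm
  -- from pseudoprime
  have hdvd : (n₂ : ℤ) ∣ (k : ℤ) ^ (n₁ * n₂ - 1) - 1 :=
    dvd_trans (Int.natCast_dvd_natCast.mpr (Dvd.intro_left n₁ rfl)) hps.2.2.2.2
  have hps2 : (k : ZMod n₂) ^ (n₁ * n₂ - 1) = 1 := by
    have := (ZMod.intCast_zmod_eq_zero_iff_dvd _ n₂).mpr hdvd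
    push_cast at this
    linear_combination this
  have hd2 : d ∣ n₁ * n₂ - 1 := orderOf_dvd_of_pow_eq_one hps2
  -- pass to ℤ
  have hn₂1 : 1 ≤ n₂ := h₂.one_lt.le
  have hn1 : 1 ≤ n₁ * n₂ := Nat.one_le_iff_ne_zero.mpr (Nat.mul_ne_zero h₁.pos.ne' h₂.pos.ne')
  have hd1' : (d : ℤ) ∣ (n₂ : ℤ) - 1 := by
    have := Int.natCast_dvd_natCast.mpr hd1
    rwa [Nat.cast_sub hn₂1, Nat.cast_one] at this
  have hd2' : (d : ℤ) ∣ (n₁ : ℤ) * n₂ - 1 := by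
    have := Int.natCast_dvd_natCast.mpr hd2
    rwa [Nat.cast_sub hn1, Nat.cast_mul, Nat.cast_one] at this
  have hdn1 : (d : ℤ) ∣ (n₁ : ℤ) - 1 := by
    have := dvd_sub hd2' (hd1'.mul_left (n₁ : ℤ))
    have e : (n₁ : ℤ) * n₂ - 1 - (n₁ : ℤ) * ((n₂ : ℤ) - 1) = (n₁ : ℤ) - 1 := by ring
    rwa [e] at this
  have hpow : (d : ℤ) ∣ (n₂ : ℤ) ^ r - 1 := by
    have h' : (n₂ : ℤ) - 1 ∣ (n₂ : ℤ) ^ r - 1 ^ r := sub_dvd_pow_sub_pow _ _ r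
    simpa using hd1'.trans h'
  have hfin : (d : ℤ) ∣ (n₂ : ℤ) ^ r - (n₁ : ℤ) := by
    have := dvd_sub hpow hdn1
    have e : (n₂ : ℤ) ^ r - 1 - ((n₁ : ℤ) - 1) = (n₂ : ℤ) ^ r - (n₁ : ℤ) := by ring
    rwa [e] at this
  have hfin' : d ∣ ((n₂ : ℤ) ^ r - (n₁ : ℤ)).natAbs := Int.natCast_dvd.mp hfin
  have hpow1 : (k : ZMod n₂) ^ ((n₂ : ℤ) ^ r - (n₁ : ℤ)).natAbs = 1 :=
    orderOf_dvd_iff_pow_eq_one.mp hfin'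
  rw [← ZMod.intCast_zmod_eq_zero_iff_dvd]
  push_cast
  rw [hpow1, sub_self]
end

section
/- Let n₁ and n₂ be distinct primes, let k > 1 be a natural number with gcd(n₁, k) = gcd(n₂, k) = 1, and suppose n = n₁·n₂ is a pseudoprime of basis k. Then n divides k^(n₁ + n₂ - 2) - 1 (as integers). -/
lemma fermat_aux (p k : ℕ) (hp : p.Prime) (hg : Nat.gcd p k = 1) :
    (p : ℤ) ∣ (k : ℤ) ^ (p - 1) - 1 := by
  haveI : Fact p.Prime := ⟨hp⟩
  have hk0 : (k : ZMod p) ≠ 0 := by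
    rw [Ne, ZMod.natCast_eq_zero_iff]
    intro hdvd
    exact hp.one_lt.ne' (Nat.eq_one_of_dvd_one (hg ▸ Nat.dvd_gcd dvd_rfl hdvd))
  have := ZMod.pow_card_sub_one_eq_one hk0
  have h : (((k : ℤ) ^ (p - 1) - 1 : ℤ) : ZMod p) = 0 := by
    push_cast
    rw [this]; ring
  exact (ZMod.intCast_zmod_eq_zero_iff_dvd _ _).mp h

theorem pseudoprime_dvd_pow_add_sub_two_sub_one (n₁ n₂ k : ℕ)
    (h₁ : n₁.Prime) (h₂ : n₂.Prime) (hne : n₁ ≠ n₂) (hk : 1 < k)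
    (hg₁ : Nat.gcd n₁ k = 1) (hg₂ : Nat.gcd n₂ k = 1)
    (hps : IsPseudoprime k (n₁ * n₂)) :
    ((n₁ * n₂ : ℕ) : ℤ) ∣ (k : ℤ) ^ (n₁ + n₂ - 2) - 1 := by
  obtain ⟨-, -, -, -, hdvd⟩ := hps
  set e := n₁ + n₂ - 2 with he
  have h2₁ := h₁.two_le
  have h2₂ := h₂.two_le
  have hef : e + (n₁ - 1) * (n₂ - 1) = n₁ * n₂ - 1 := by
    cases' Nat.exists_eq_add_of_le h2₁ with a ha
    cases' Nat.exists_eq_add_of_le h2₂ with b hb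
    subst ha hb
    simp [he]; ring_nf; omega
  -- p ∣ k^e - 1 for p ∈ {n₁, n₂}
  have key : ∀ p q : ℕ, p.Prime → Nat.gcd p k = 1 → (p : ℤ) ∣ ((p * q : ℕ) : ℤ) →
      ((p * q : ℕ) : ℤ) ∣ (k : ℤ) ^ (p * q - 1) - 1 → p * q - 1 = e + (p - 1) * (q - 1) →
      (p : ℤ) ∣ (k : ℤ) ^ e - 1 := by
    intro p q hp hg hpdvd hkd heq
    have hf : (p : ℤ) ∣ (k : ℤ) ^ ((p - 1) * (q - 1)) - 1 := by
      have h1 : (k : ℤ) ^ (p - 1) - 1 ∣ ((k : ℤ) ^ (p - 1)) ^ (q - 1) - 1 ^ (q - 1) :=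
        sub_dvd_pow_sub_pow _ _ _
      rw [← pow_mul, one_pow] at h1
      exact (fermat_aux p k hp hg).trans h1
    have hE : (p : ℤ) ∣ (k : ℤ) ^ (e + (p - 1) * (q - 1)) - 1 := by
      rw [← heq]; exact hpdvd.trans hkd
    have : (k : ℤ) ^ e - 1 =
        ((k : ℤ) ^ (e + (p - 1) * (q - 1)) - 1) - (k : ℤ) ^ e * ((k : ℤ) ^ ((p - 1) * (q - 1)) - 1) := by
      rw [pow_add]; ring
    rw [this]
    exact dvd_sub hE (Dvd.dvd.mul_left hf _)
  have d₁ : (n₁ : ℤ) ∣ (k : ℤ) ^ e - 1 := by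
    refine key n₁ n₂ h₁ hg₁ ?_ hdvd hef.symm
    push_cast; exact Dvd.intro _ rfl
  have d₂ : (n₂ : ℤ) ∣ (k : ℤ) ^ e - 1 := by
    refine key n₂ n₁ h₂ hg₂ ?_ ?_ ?_
    · push_cast; exact Dvd.intro _ rfl
    · rwa [Nat.mul_comm]
    · rw [Nat.mul_comm n₂ n₁, Nat.mul_comm (n₂-1) (n₁-1)]; omega
  have hcop : IsCoprime (n₁ : ℤ) (n₂ : ℤ) :=
    Nat.isCoprime_iff_coprime.mpr ((Nat.coprime_primes h₁ h₂).mpr hne)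
  push_cast
  exact hcop.mul_dvd d₁ d₂
end

section
/- Let n₁ and n₂ be distinct primes, let k > 1 be a natural number with gcd(n₁, k) = gcd(n₂, k) = 1, and suppose n = n₁·n₂ is a pseudoprime of basis k. Then for all integers r and s such that r·n₁ + s·n₂ - (r + s) > 0, n divides k^(r·n₁ + s·n₂ - (r + s)) - 1 (as integers). -/
lemma key_pseudo (p q k : ℕ) (hp : p.Prime) (hq : q.Prime) (hpk : Nat.gcd p k = 1)
    (hdvd : ((p * q : ℕ) : ℤ) ∣ (k : ℤ) ^ (p * q - 1) - 1) (e : ℕ) (r s : ℤ)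
    (hecast : (e : ℤ) = r * ((p : ℤ) - 1) + s * ((q : ℤ) - 1)) :
    (p : ℤ) ∣ (k : ℤ) ^ e - 1 := by
  haveI : Fact p.Prime := ⟨hp⟩
  set a : ZMod p := (k : ZMod p) with ha
  have ha0 : a ≠ 0 := by
    rw [ha, Ne, ZMod.natCast_eq_zero_iff]
    intro h
    have := Nat.dvd_gcd (dvd_refl p) h
    rw [hpk] at this
    exact hp.one_lt.ne' (Nat.eq_one_of_dvd_one this)
  set d := orderOf a with hd
  have hd1 : d ∣ p - 1 := orderOf_dvd_of_pow_eq_one (ZMod.pow_card_sub_one_eq_one ha0)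
  have hd2 : d ∣ p * q - 1 := by
    apply orderOf_dvd_of_pow_eq_one
    have h2 : (p : ℤ) ∣ (k : ℤ) ^ (p * q - 1) - 1 :=
      dvd_trans (by exact_mod_cast Dvd.intro q rfl) hdvd
    have := (ZMod.intCast_zmod_eq_zero_iff_dvd _ p).mpr h2
    push_cast at this
    linear_combination this
  have hp1 : 1 ≤ p := hp.one_lt.le
  have hq1 : 1 ≤ q := hq.one_lt.le
  have hpq1 : 1 ≤ p * q := Nat.one_le_iff_ne_zero.mpr (by positivity)
  have hd1' : (d : ℤ) ∣ (p : ℤ) - 1 := by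
    have := Int.natCast_dvd_natCast.mpr hd1
    rwa [Nat.cast_sub hp1, Nat.cast_one] at this
  have hd2' : (d : ℤ) ∣ (p : ℤ) * q - 1 := by
    have := Int.natCast_dvd_natCast.mpr hd2
    rwa [Nat.cast_sub hpq1, Nat.cast_mul, Nat.cast_one] at this
  have hdq : (d : ℤ) ∣ (q : ℤ) - 1 := by
    have : (q : ℤ) - 1 = ((p : ℤ) * q - 1) - ((p : ℤ) - 1) * q := by ring
    rw [this]
    exact dvd_sub hd2' (hd1'.mul_right _)
  have hde : (d : ℤ) ∣ (e : ℤ) := by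
    rw [hecast]
    exact dvd_add ((hd1'.mul_left r)) ((hdq.mul_left s))
  have hae : a ^ e = 1 := orderOf_dvd_iff_pow_eq_one.mp (Int.natCast_dvd_natCast.mp hde)
  rw [← ZMod.intCast_zmod_eq_zero_iff_dvd]
  push_cast
  linear_combination hae

theorem pseudoprime_dvd_pow_lin_comb_sub_one (n₁ n₂ k : ℕ)
    (h₁ : n₁.Prime) (h₂ : n₂.Prime) (hne : n₁ ≠ n₂) (hk : 1 < k)
    (hg₁ : Nat.gcd n₁ k = 1) (hg₂ : Nat.gcd n₂ k = 1)
    (hps : IsPseudoprime k (n₁ * n₂)) :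
    ∀ r s : ℤ, 0 < r * n₁ + s * n₂ - (r + s) →
      ((n₁ * n₂ : ℕ) : ℤ) ∣ (k : ℤ) ^ (r * n₁ + s * n₂ - (r + s)).natAbs - 1 := by
  intro r s hpos
  obtain ⟨-, -, -, -, hdvd⟩ := hps
  set e := (r * n₁ + s * n₂ - (r + s)).natAbs with he
  have hecast : (e : ℤ) = r * ((n₁ : ℤ) - 1) + s * ((n₂ : ℤ) - 1) := by
    rw [he, Int.natAbs_of_nonneg hpos.le]; ring
  have h1 : (n₁ : ℤ) ∣ (k : ℤ) ^ e - 1 :=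
    key_pseudo n₁ n₂ k h₁ h₂ hg₁ hdvd e r s hecast
  have h2 : (n₂ : ℤ) ∣ (k : ℤ) ^ e - 1 := by
    apply key_pseudo n₂ n₁ k h₂ h₁ hg₂ _ e s r (by rw [hecast]; ring)
    rwa [Nat.mul_comm]
  have hcop : IsCoprime (n₁ : ℤ) (n₂ : ℤ) :=
    Int.isCoprime_iff_gcd_eq_one.mpr (by
      simpa using (Nat.coprime_primes h₁ h₂).mpr hne)
  push_cast
  exact hcop.mul_dvd h1 h2
end

section
/- Let n₁, n₂, n₃ be distinct primes, let k > 1 be a natural number with gcd(nᵢ, k) = 1 for i = 1, 2, 3, and suppose n = n₁·n₂·n₃ is a pseudoprime of basis k. Then n divides k^(n₁n₂) + k^(n₁n₃) + k^(n₂n₃) - k^(n₁) - k^(n₂) - k^(n₃) (as integers). -/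
lemma aux_pow (k p m : ℕ) [Fact p.Prime] (hm : 1 ≤ m)
    (hd : (p:ℤ) ∣ (k:ℤ)^(m-1) - 1) :
    ((k : ZMod p))^m = (k : ZMod p) := by
  have h1 : ((k:ZMod p))^(m-1) = 1 := by
    have h := (ZMod.intCast_zmod_eq_zero_iff_dvd _ p).mpr hd
    push_cast at h
    linear_combination h
  calc (k:ZMod p)^m = (k:ZMod p)^(m-1) * (k:ZMod p) := by
        rw [← pow_succ, Nat.sub_add_cancel hm]
    _ = (k:ZMod p) := by rw [h1, one_mul]

lemma aux_prime_dvd (k p q r : ℕ) (hp : p.Prime) (hqr : 1 ≤ p * (q * r))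
    (hd : (p:ℤ) ∣ (k:ℤ)^(p*(q*r)-1) - 1) :
    (p:ℤ) ∣ (k:ℤ)^(p*q) + (k:ℤ)^(p*r) + (k:ℤ)^(q*r) - (k:ℤ)^p - (k:ℤ)^q - (k:ℤ)^r := by
  haveI : Fact p.Prime := ⟨hp⟩
  set a : ZMod p := (k : ZMod p) with ha
  have F : a^p = a := ZMod.pow_card _
  have hm : a^(p*(q*r)) = a := aux_pow k p _ hqr hd
  have e1 : a^(q*r) = a := by
    conv_lhs => rw [← F]
    rw [← pow_mul]; exact hm
  have e2 : a^(p*q) = a^q := by rw [pow_mul, F]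
  have e3 : a^(p*r) = a^r := by rw [pow_mul, F]
  rw [← ZMod.intCast_zmod_eq_zero_iff_dvd]
  push_cast
  rw [← ha]
  rw [e1, e2, e3, F]; ring

theorem pseudoprime_three_factors_dvd (n₁ n₂ n₃ k : ℕ)
    (h₁ : n₁.Prime) (h₂ : n₂.Prime) (h₃ : n₃.Prime)
    (h₁₂ : n₁ ≠ n₂) (h₁₃ : n₁ ≠ n₃) (h₂₃ : n₂ ≠ n₃) (hk : 1 < k)
    (hg₁ : Nat.gcd n₁ k = 1) (hg₂ : Nat.gcd n₂ k = 1) (hg₃ : Nat.gcd n₃ k = 1)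
    (hps : IsPseudoprime k (n₁ * n₂ * n₃)) :
    ((n₁ * n₂ * n₃ : ℕ) : ℤ) ∣
      (k : ℤ) ^ (n₁ * n₂) + (k : ℤ) ^ (n₁ * n₃) + (k : ℤ) ^ (n₂ * n₃)
        - (k : ℤ) ^ n₁ - (k : ℤ) ^ n₂ - (k : ℤ) ^ n₃ := by
  obtain ⟨-, hn1, -, -, hd⟩ := hps
  have t₁ := h₁.two_le; have t₂ := h₂.two_le; have t₃ := h₃.two_le
  have h1 : 1 ≤ n₁ * (n₂ * n₃) := by nlinarith
  have h2 : 1 ≤ n₂ * (n₁ * n₃) := by nlinarith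
  have h3 : 1 ≤ n₃ * (n₁ * n₂) := by nlinarith
  have d1 : (n₁:ℤ) ∣ (k:ℤ)^(n₁*(n₂*n₃)-1) - 1 := by
    have hE : n₁ * n₂ * n₃ = n₁ * (n₂ * n₃) := by ring
    refine dvd_trans ?_ (hE ▸ hd)
    exact_mod_cast Int.natCast_dvd_natCast.mpr ⟨n₂*n₃, by ring⟩
  have d2 : (n₂:ℤ) ∣ (k:ℤ)^(n₂*(n₁*n₃)-1) - 1 := by
    have hE : n₁ * n₂ * n₃ = n₂ * (n₁ * n₃) := by ring
    refine dvd_trans ?_ (hE ▸ hd)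
    exact_mod_cast Int.natCast_dvd_natCast.mpr ⟨n₁*n₃, by ring⟩
  have d3 : (n₃:ℤ) ∣ (k:ℤ)^(n₃*(n₁*n₂)-1) - 1 := by
    have hE : n₁ * n₂ * n₃ = n₃ * (n₁ * n₂) := by ring
    refine dvd_trans ?_ (hE ▸ hd)
    exact_mod_cast Int.natCast_dvd_natCast.mpr ⟨n₁*n₂, by ring⟩
  have D1 := aux_prime_dvd k n₁ n₂ n₃ h₁ h1 d1
  have D2 := aux_prime_dvd k n₂ n₁ n₃ h₂ h2 d2
  have D3 := aux_prime_dvd k n₃ n₁ n₂ h₃ h3 d3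
  have D2' : (n₂:ℤ) ∣ (k:ℤ)^(n₁*n₂) + (k:ℤ)^(n₁*n₃) + (k:ℤ)^(n₂*n₃)
      - (k:ℤ)^n₁ - (k:ℤ)^n₂ - (k:ℤ)^n₃ := by
    obtain ⟨c, hc⟩ := D2
    refine ⟨c, ?_⟩
    rw [mul_comm n₁ n₂]
    linear_combination hc
  have D3' : (n₃:ℤ) ∣ (k:ℤ)^(n₁*n₂) + (k:ℤ)^(n₁*n₃) + (k:ℤ)^(n₂*n₃)
      - (k:ℤ)^n₁ - (k:ℤ)^n₂ - (k:ℤ)^n₃ := by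
    obtain ⟨c, hc⟩ := D3
    refine ⟨c, ?_⟩
    rw [mul_comm n₁ n₃, mul_comm n₂ n₃]
    linear_combination hc
  have c12 : IsCoprime (n₁:ℤ) (n₂:ℤ) :=
    Int.isCoprime_iff_gcd_eq_one.mpr (by exact_mod_cast (Nat.coprime_primes h₁ h₂).mpr h₁₂)
  have c13 : IsCoprime (n₁:ℤ) (n₃:ℤ) :=
    Int.isCoprime_iff_gcd_eq_one.mpr (by exact_mod_cast (Nat.coprime_primes h₁ h₃).mpr h₁₃)
  have c23 : IsCoprime (n₂:ℤ) (n₃:ℤ) :=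
    Int.isCoprime_iff_gcd_eq_one.mpr (by exact_mod_cast (Nat.coprime_primes h₂ h₃).mpr h₂₃)
  have : ((n₁:ℤ) * n₂) * n₃ ∣ (k:ℤ)^(n₁*n₂) + (k:ℤ)^(n₁*n₃) + (k:ℤ)^(n₂*n₃)
      - (k:ℤ)^n₁ - (k:ℤ)^n₂ - (k:ℤ)^n₃ :=
    (IsCoprime.mul_left c13 c23).mul_dvd (c12.mul_dvd D1 D2') D3'
  push_cast
  exact this
end

section
/- Let n₁, n₂, n₃ be distinct primes, let k > 1 be a natural number with gcd(nᵢ, k) = 1 for i = 1, 2, 3, and suppose n = n₁·n₂·n₃ is a pseudoprime of basis k. Then n₁ divides k^(|n₂n₃ - n₁|) - 1, n₂ divides k^(|n₁n₃ - n₂|) - 1, and n₃ divides k^(|n₁n₂ - n₃|) - 1 (as integers). -/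
lemma key_lemma (p m k : ℕ) (hp : p.Prime) (hg : Nat.gcd p k = 1) (hm : 0 < m)
    (hd : (p : ℤ) ∣ (k : ℤ) ^ (p * m - 1) - 1) :
    (p : ℤ) ∣ (k : ℤ) ^ ((m : ℤ) - (p : ℤ)).natAbs - 1 := by
  haveI : Fact p.Prime := ⟨hp⟩
  have hp1 := hp.one_lt
  set u : ZMod p := (k : ZMod p) with hu
  have hu0 : u ≠ 0 := by
    rw [hu, Ne, ZMod.natCast_eq_zero_iff]
    exact hp.coprime_iff_not_dvd.mp hg
  have h1 : u ^ (p - 1) = 1 := ZMod.pow_card_sub_one_eq_one hu0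
  have h2 : u ^ (p * m - 1) = 1 := by
    have h := (ZMod.intCast_zmod_eq_zero_iff_dvd _ p).mpr hd
    push_cast at h
    exact sub_eq_zero.mp h
  set d := orderOf u with hdd
  have hd1 : d ∣ p - 1 := orderOf_dvd_of_pow_eq_one h1
  have hd2 : d ∣ p * m - 1 := orderOf_dvd_of_pow_eq_one h2
  have hpm : 1 ≤ p * m := Nat.one_le_iff_ne_zero.mpr (by positivity)
  have hzd : (d : ℤ) ∣ (m : ℤ) - (p : ℤ) := by
    have e1 : (d : ℤ) ∣ ((p * m - 1 : ℕ) : ℤ) := Int.natCast_dvd_natCast.mpr hd2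
    have e2 : (d : ℤ) ∣ ((p - 1 : ℕ) : ℤ) := Int.natCast_dvd_natCast.mpr hd1
    have eq1 : ((p * m - 1 : ℕ) : ℤ) = (p : ℤ) * m - 1 := by
      push_cast [Nat.cast_sub hpm]; ring
    have eq2 : ((p - 1 : ℕ) : ℤ) = (p : ℤ) - 1 := by
      push_cast [Nat.cast_sub hp1.le]; ring
    have key : (m : ℤ) - (p : ℤ)
        = ((p : ℤ) * m - 1) - ((p : ℤ) - 1) * ((m : ℤ) + 1) := by ring
    rw [key, ← eq1, ← eq2]
    exact dvd_sub e1 (Dvd.dvd.mul_right e2 _)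
  have hde : d ∣ ((m : ℤ) - (p : ℤ)).natAbs := by
    have := Int.dvd_natAbs.mpr hzd
    exact_mod_cast this
  have h3 : u ^ ((m : ℤ) - (p : ℤ)).natAbs = 1 := orderOf_dvd_iff_pow_eq_one.mp hde
  rw [← ZMod.intCast_zmod_eq_zero_iff_dvd]
  push_cast
  rw [sub_eq_zero]
  exact h3

theorem pseudoprime_three_factors_dvd_abs (n₁ n₂ n₃ k : ℕ)
    (h₁ : n₁.Prime) (h₂ : n₂.Prime) (h₃ : n₃.Prime)
    (h₁₂ : n₁ ≠ n₂) (h₁₃ : n₁ ≠ n₃) (h₂₃ : n₂ ≠ n₃) (hk : 1 < k)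
    (hg₁ : Nat.gcd n₁ k = 1) (hg₂ : Nat.gcd n₂ k = 1) (hg₃ : Nat.gcd n₃ k = 1)
    (hps : IsPseudoprime k (n₁ * n₂ * n₃)) :
    (n₁ : ℤ) ∣ (k : ℤ) ^ ((n₂ * n₃ : ℤ) - (n₁ : ℤ)).natAbs - 1 ∧
      (n₂ : ℤ) ∣ (k : ℤ) ^ ((n₁ * n₃ : ℤ) - (n₂ : ℤ)).natAbs - 1 ∧
        (n₃ : ℤ) ∣ (k : ℤ) ^ ((n₁ * n₂ : ℤ) - (n₃ : ℤ)).natAbs - 1 := by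
  obtain ⟨-, -, -, -, hdvd⟩ := hps
  have p1 := h₁.pos; have p2 := h₂.pos; have p3 := h₃.pos
  refine ⟨?_, ?_, ?_⟩
  · have e : n₁ * (n₂ * n₃) = n₁ * n₂ * n₃ := by ring
    have hd' : (n₁ : ℤ) ∣ (k : ℤ) ^ (n₁ * (n₂ * n₃) - 1) - 1 := by
      rw [e]
      exact dvd_trans (Int.natCast_dvd_natCast.mpr ⟨n₂ * n₃, by ring⟩) hdvd
    have h := key_lemma n₁ (n₂ * n₃) k h₁ hg₁ (Nat.mul_pos p2 p3) hd'
    exact_mod_cast h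
  · have e : n₂ * (n₁ * n₃) = n₁ * n₂ * n₃ := by ring
    have hd' : (n₂ : ℤ) ∣ (k : ℤ) ^ (n₂ * (n₁ * n₃) - 1) - 1 := by
      rw [e]
      exact dvd_trans (Int.natCast_dvd_natCast.mpr ⟨n₁ * n₃, by ring⟩) hdvd
    have h := key_lemma n₂ (n₁ * n₃) k h₂ hg₂ (Nat.mul_pos p1 p3) hd'
    exact_mod_cast h
  · have e : n₃ * (n₁ * n₂) = n₁ * n₂ * n₃ := by ring
    have hd' : (n₃ : ℤ) ∣ (k : ℤ) ^ (n₃ * (n₁ * n₂) - 1) - 1 := by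
      rw [e]
      exact dvd_trans (Int.natCast_dvd_natCast.mpr ⟨n₁ * n₂, by ring⟩) hdvd
    have h := key_lemma n₃ (n₁ * n₂) k h₃ hg₃ (Nat.mul_pos p1 p2) hd'
    exact_mod_cast h
end

section
/- Let n₁, n₂, n₃ be distinct primes, let k > 1 be a natural number with gcd(nᵢ, k) = 1 for i = 1, 2, 3, and suppose n = n₁·n₂·n₃ is a pseudoprime of basis k. Then for all natural numbers m ≥ 1 and j ≥ 1: n₁ divides k^(j·|n₂n₃ - n₁^m|) - 1, n₂ divides k^(j·|n₁n₃ - n₂^m|) - 1, and n₃ divides k^(j·|n₁n₂ - n₃^m|) - 1 (as integers). -/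
theorem Int.modEq_pow_of_modEq_one_of_mul_modEq_one {d p c : ℤ} (hp : p ≡ 1 [ZMOD d])
    (hpc : p * c ≡ 1 [ZMOD d]) (m : ℕ) : c ≡ p ^ m [ZMOD d] :=
  calc c = 1 * c := (one_mul c).symm
    _ ≡ p * c [ZMOD d] := hp.symm.mul_right c
    _ ≡ 1 [ZMOD d] := hpc
    _ = 1 ^ m := (one_pow m).symm
    _ ≡ p ^ m [ZMOD d] := hp.symm.pow m

theorem natCast_modEq_one_of_pow_sub_one_eq_one {M : Type*} [Monoid M] {g : M} {n : ℕ}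
    (hn : 0 < n) (h : g ^ (n - 1) = 1) : (n : ℤ) ≡ 1 [ZMOD orderOf g] := by
  have hdvd : ((orderOf g : ℕ) : ℤ) ∣ ((n - 1 : ℕ) : ℤ) :=
    Int.natCast_dvd_natCast.mpr (orderOf_dvd_of_pow_eq_one h)
  rw [Nat.cast_sub hn, Nat.cast_one] at hdvd
  exact (Int.modEq_of_dvd hdvd).symm

theorem pow_mul_natAbs_sub_pow_eq_one {M : Type*} [Monoid M] {g : M} {p c : ℕ}
    (hpc : 0 < p * c) (hp : g ^ (p - 1) = 1) (hn : g ^ (p * c - 1) = 1) (m j : ℕ) :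
    g ^ (j * ((c : ℤ) - (p : ℤ) ^ m).natAbs) = 1 := by
  have hp1 := natCast_modEq_one_of_pow_sub_one_eq_one (Nat.pos_of_mul_pos_right hpc) hp
  have hpc1 := natCast_modEq_one_of_pow_sub_one_eq_one hpc hn
  push_cast at hpc1
  have hdvd : (orderOf g : ℤ) ∣ (c : ℤ) - (p : ℤ) ^ m :=
    (Int.modEq_pow_of_modEq_one_of_mul_modEq_one hp1 hpc1 m).symm.dvd
  apply orderOf_dvd_iff_pow_eq_one.mp
  exact Dvd.dvd.mul_left (Int.natCast_dvd.mp hdvd) j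

theorem Int.natCast_dvd_pow_sub_one_iff (p k e : ℕ) :
    (p : ℤ) ∣ (k : ℤ) ^ e - 1 ↔ (k : ZMod p) ^ e = 1 := by
  rw [← ZMod.intCast_zmod_eq_zero_iff_dvd]
  push_cast
  exact sub_eq_zero

theorem IsPseudoprime.dvd_pow_mul_natAbs_sub_pow_sub_one {k p c : ℕ}
    (hps : IsPseudoprime k (p * c)) (hp : p.Prime) (hpk : Nat.gcd p k = 1) (m j : ℕ) :
    (p : ℤ) ∣ (k : ℤ) ^ (j * ((c : ℤ) - (p : ℤ) ^ m).natAbs) - 1 := by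
  obtain ⟨-, hpos, -, -, hdvd⟩ := hps
  have := Fact.mk hp
  have hk : (k : ZMod p) ≠ 0 := by
    rw [Ne, ZMod.natCast_eq_zero_iff]
    exact (Nat.Prime.coprime_iff_not_dvd hp).mp hpk
  have hn : (p : ℤ) ∣ (k : ℤ) ^ (p * c - 1) - 1 :=
    (Int.natCast_dvd_natCast.mpr (dvd_mul_right p c)).trans hdvd
  rw [Int.natCast_dvd_pow_sub_one_iff] at hn ⊢
  exact pow_mul_natAbs_sub_pow_eq_one (by omega) (ZMod.pow_card_sub_one_eq_one hk) hn m j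

theorem pseudoprime_three_factors_dvd_abs_pow_general (n₁ n₂ n₃ k : ℕ)
    (h₁ : n₁.Prime) (h₂ : n₂.Prime) (h₃ : n₃.Prime)
    (hg₁ : Nat.gcd n₁ k = 1) (hg₂ : Nat.gcd n₂ k = 1) (hg₃ : Nat.gcd n₃ k = 1)
    (hps : IsPseudoprime k (n₁ * n₂ * n₃)) :
    ∀ m j : ℕ, 1 ≤ m → 1 ≤ j →
      (n₁ : ℤ) ∣ (k : ℤ) ^ (j * ((n₂ * n₃ : ℤ) - (n₁ : ℤ) ^ m).natAbs) - 1 ∧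
        (n₂ : ℤ) ∣ (k : ℤ) ^ (j * ((n₁ * n₃ : ℤ) - (n₂ : ℤ) ^ m).natAbs) - 1 ∧
          (n₃ : ℤ) ∣ (k : ℤ) ^ (j * ((n₁ * n₂ : ℤ) - (n₃ : ℤ) ^ m).natAbs) - 1 := by
  intro m j _ _
  have hps₁ : IsPseudoprime k (n₁ * (n₂ * n₃)) := by rwa [← mul_assoc]
  have hps₂ : IsPseudoprime k (n₂ * (n₁ * n₃)) := by rwa [mul_left_comm, ← mul_assoc]
  have hps₃ : IsPseudoprime k (n₃ * (n₁ * n₂)) := by rwa [mul_comm]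
  refine ⟨?_, ?_, ?_⟩
  · simpa using hps₁.dvd_pow_mul_natAbs_sub_pow_sub_one h₁ hg₁ m j
  · simpa using hps₂.dvd_pow_mul_natAbs_sub_pow_sub_one h₂ hg₂ m j
  · simpa using hps₃.dvd_pow_mul_natAbs_sub_pow_sub_one h₃ hg₃ m j

theorem pseudoprime_three_factors_dvd_abs_pow (n₁ n₂ n₃ k : ℕ)
    (h₁ : n₁.Prime) (h₂ : n₂.Prime) (h₃ : n₃.Prime)
    (h₁₂ : n₁ ≠ n₂) (h₁₃ : n₁ ≠ n₃) (h₂₃ : n₂ ≠ n₃) (hk : 1 < k)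
    (hg₁ : Nat.gcd n₁ k = 1) (hg₂ : Nat.gcd n₂ k = 1) (hg₃ : Nat.gcd n₃ k = 1)
    (hps : IsPseudoprime k (n₁ * n₂ * n₃)) :
    ∀ m j : ℕ, 1 ≤ m → 1 ≤ j →
      (n₁ : ℤ) ∣ (k : ℤ) ^ (j * ((n₂ * n₃ : ℤ) - (n₁ : ℤ) ^ m).natAbs) - 1 ∧
        (n₂ : ℤ) ∣ (k : ℤ) ^ (j * ((n₁ * n₃ : ℤ) - (n₂ : ℤ) ^ m).natAbs) - 1 ∧
          (n₃ : ℤ) ∣ (k : ℤ) ^ (j * ((n₁ * n₂ : ℤ) - (n₃ : ℤ) ^ m).natAbs) - 1 :=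
  pseudoprime_three_factors_dvd_abs_pow_general n₁ n₂ n₃ k h₁ h₂ h₃ hg₁ hg₂ hg₃ hps
end
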